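/- arXiv:1808.10474 — 3 statements merged into one kernel-verified Lean document; each statement's English description precedes it below -/
import Mathlib

section
/- Fix p > 2 and set β₁ = p/(2(p−1)), β₂ = (3p−2)/(4(p−1)) ∈ (3/4, 1), and k₂ = (2μ_f)^{β₁}·2^{β₂}. Let f satisfy the Polyak–Łojasiewicz inequality with constant μ_f > 0 and have unique minimizer x* with f* = f(x*). Let x : ℝ → ℝⁿ be any trajectory of the modified gradient flow ẋ = −∇f(x)/‖∇f(x)‖^{(p−2)/(p−1)} (right-hand side taken to be 0 when ∇f(x) = 0). Then f(x(t)) = f* for every t ≥ (f(x(0)) − f*)^{2−2β₂}/(2^{1−β₂} k₂ (1−β₂)). -/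
open scoped RealInnerProductSpace Classical

/-!
Along the flow, `V = f ∘ x - f*` satisfies `V' = -‖∇f‖ ^ (p / (p - 1))`, and the PL inequality
turns this into `V' ≤ -(2 μ_f) ^ β₁ V ^ β₁` with `β₁ < 1`. Hence `V ^ (1 - β₁)` decreases at
rate at least `(2 μ_f) ^ β₁ (1 - β₁)` while `V > 0`, so `V` vanishes once
`t ≥ V 0 ^ (1 - β₁) / ((2 μ_f) ^ β₁ (1 - β₁))`; this is the stated time, as `2 - 2 β₂ = 1 - β₁`.
-/

open Set

section DifferentialInequality

variable {V V' : ℝ → ℝ} {a b c β : ℝ}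

theorem rpow_add_mul_le_rpow_of_hasDerivAt_le_neg_mul_rpow (hβ : β ≤ 1) (hab : a ≤ b)
    (hV : ∀ s ∈ Icc a b, HasDerivAt V (V' s) s) (hpos : ∀ s ∈ Icc a b, 0 < V s)
    (hle : ∀ s ∈ Icc a b, V' s ≤ -(c * V s ^ β)) :
    V b ^ (1 - β) + c * (1 - β) * (b - a) ≤ V a ^ (1 - β) := by
  set W : ℝ → ℝ := fun s => V s ^ (1 - β) + c * (1 - β) * s
  have hW : ∀ s ∈ Icc a b,
      HasDerivAt W ((1 - β) * V s ^ (1 - β - 1) * V' s + c * (1 - β)) s := fun s hs =>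
    ((Real.hasDerivAt_rpow_const (Or.inl (hpos s hs).ne')).comp s (hV s hs)).add
      ((hasDerivAt_id s).const_mul _ |>.congr_deriv (mul_one _))
  have hW' : ∀ s ∈ Icc a b, (1 - β) * V s ^ (1 - β - 1) * V' s + c * (1 - β) ≤ 0 := by
    intro s hs
    have hinv : V s ^ (1 - β - 1) * V s ^ β = 1 := by
      rw [← Real.rpow_add (hpos s hs)]; simp
    calc (1 - β) * V s ^ (1 - β - 1) * V' s + c * (1 - β)
        ≤ (1 - β) * V s ^ (1 - β - 1) * -(c * V s ^ β) + c * (1 - β) := by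
          gcongr
          · exact mul_nonneg (by linarith) (Real.rpow_nonneg (hpos s hs).le _)
          · exact hle s hs
      _ = 0 := by linear_combination (-(c * (1 - β))) * hinv
  have hanti : AntitoneOn W (Icc a b) :=
    antitoneOn_of_hasDerivWithinAt_nonpos (convex_Icc a b)
      (fun s hs => (hW s hs).continuousAt.continuousWithinAt)
      (fun s hs => (hW s (interior_subset hs)).hasDerivWithinAt)
      (fun s hs => hW' s (interior_subset hs))
  have := hanti (left_mem_Icc.2 hab) (right_mem_Icc.2 hab) hab
  simp only [W] at this
  linarith

theorem eq_zero_of_hasDerivAt_le_neg_mul_rpow (hc : 0 < c) (hβ : β < 1)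
    (hnonneg : ∀ s, 0 ≤ V s) (hV : ∀ s, 0 ≤ s → HasDerivAt V (V' s) s)
    (hle : ∀ s, 0 ≤ s → V' s ≤ -(c * V s ^ β)) {t : ℝ}
    (ht : V 0 ^ (1 - β) / (c * (1 - β)) ≤ t) : V t = 0 := by
  have hcβ : 0 < c * (1 - β) := mul_pos hc (by linarith)
  have ht0 : 0 ≤ t := le_trans (div_nonneg (Real.rpow_nonneg (hnonneg 0) _) hcβ.le) ht
  have hanti : AntitoneOn V (Icc 0 t) :=
    antitoneOn_of_hasDerivWithinAt_nonpos (convex_Icc 0 t)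
      (fun s hs => (hV s hs.1).continuousAt.continuousWithinAt)
      (fun s hs => (hV s (interior_subset hs).1).hasDerivWithinAt)
      (fun s hs => (hle s (interior_subset hs).1).trans <|
        neg_nonpos.2 (mul_nonneg hc.le (Real.rpow_nonneg (hnonneg s) _)))
  by_contra hVt
  have hpos : ∀ s ∈ Icc 0 t, 0 < V s := fun s hs =>
    ((hnonneg t).lt_of_ne' hVt).trans_le (hanti hs (right_mem_Icc.2 ht0) hs.2)
  have hdecay := rpow_add_mul_le_rpow_of_hasDerivAt_le_neg_mul_rpow hβ.le ht0
    (fun s hs => hV s hs.1) hpos (fun s hs => hle s hs.1)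
  have hVtpos : 0 < V t ^ (1 - β) := Real.rpow_pos_of_pos (hpos t (right_mem_Icc.2 ht0)) _
  rw [div_le_iff₀ hcβ] at ht
  linarith

end DifferentialInequality

section ModifiedGradientFlow

variable {E : Type*} [NormedAddCommGroup E] [InnerProductSpace ℝ E]

theorem inner_neg_inv_rpow_smul_self {r : ℝ} (hr : r ≠ 2) (g : E) :
    ⟪g, -(‖g‖ ^ r)⁻¹ • g⟫ = -‖g‖ ^ (2 - r) := by
  rcases eq_or_ne g 0 with rfl | hg
  · simp [Real.zero_rpow (sub_ne_zero.2 hr.symm)]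
  have hg : 0 < ‖g‖ := norm_pos_iff.2 hg
  rw [inner_smul_right, real_inner_self_eq_norm_sq, ← Real.rpow_natCast, neg_mul,
    ← Real.rpow_neg hg.le, ← Real.rpow_add hg]
  norm_num [neg_add_eq_sub]

theorem hasDerivAt_comp_of_modifiedGradientFlow [CompleteSpace E] [DecidableEq E] {f : E → ℝ} {x : ℝ → E} {r t : ℝ} (hr : r ≠ 2)
    (hf : DifferentiableAt ℝ f (x t))
    (hx : HasDerivAt x (if gradient f (x t) = 0 then 0
      else -(‖gradient f (x t)‖ ^ r)⁻¹ • gradient f (x t)) t) :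
    HasDerivAt (fun s => f (x s)) (-‖gradient f (x t)‖ ^ (2 - r)) t := by
  have hfield : (if gradient f (x t) = 0 then 0
      else -(‖gradient f (x t)‖ ^ r)⁻¹ • gradient f (x t)) =
      -(‖gradient f (x t)‖ ^ r)⁻¹ • gradient f (x t) := by
    split_ifs with h <;> simp [h]
  rw [hfield] at hx
  have := hf.hasGradientAt.hasFDerivAt.comp_hasDerivAt t hx
  rwa [InnerProductSpace.toDual_apply_apply, inner_neg_inv_rpow_smul_self hr] at this

end ModifiedGradientFlow

theorem mul_rpow_le_rpow_of_mul_le_half_sq {μ v w a : ℝ} (hμ : 0 ≤ μ) (hv : 0 ≤ v) (hw : 0 ≤ w)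
    (ha : 0 ≤ a) (h : μ * v ≤ 1 / 2 * w ^ 2) : (2 * μ) ^ a * v ^ a ≤ w ^ (2 * a) := by
  rw [← Real.mul_rpow (by positivity) hv, Real.rpow_mul hw, Real.rpow_two]
  exact Real.rpow_le_rpow (by positivity) (by linarith) ha

theorem modified_gradient_flow_finite_time_PL_general
    {n : ℕ} (p : ℝ) (hp : 2 < p)
    (β₁ β₂ k₂ : ℝ) (hβ₁ : β₁ = p / (2 * (p - 1))) (hβ₂ : β₂ = (3 * p - 2) / (4 * (p - 1)))
    (μf : ℝ) (hμf : 0 < μf) (hk₂ : k₂ = (2 * μf) ^ β₁ * 2 ^ β₂)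
    (f : EuclideanSpace ℝ (Fin n) → ℝ) (hf : ContDiff ℝ 1 f)
    (xstar : EuclideanSpace ℝ (Fin n))
    (hmin : ∀ y, f xstar ≤ f y)
    (hPL : ∀ y : EuclideanSpace ℝ (Fin n),
      μf * (f y - f xstar) ≤ (1 / 2) * ‖gradient f y‖ ^ 2)
    (x : ℝ → EuclideanSpace ℝ (Fin n))
    (hx : ∀ t : ℝ, 0 ≤ t → HasDerivAt x
      (if gradient f (x t) = 0 then 0
       else -(‖gradient f (x t)‖ ^ ((p - 2) / (p - 1)))⁻¹ • gradient f (x t)) t) :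
    ∀ t : ℝ,
      (f (x 0) - f xstar) ^ (2 - 2 * β₂) / (2 ^ (1 - β₂) * k₂ * (1 - β₂)) ≤ t →
      f (x t) = f xstar := by
  intro t ht
  have hp1 : 0 < p - 1 := by linarith
  have hβ₁pos : 0 ≤ β₁ := by rw [hβ₁]; positivity
  have hβ₁lt : β₁ < 1 := by rw [hβ₁, div_lt_one (by linarith)]; linarith
  have hr : 2 - (p - 2) / (p - 1) = 2 * β₁ := by rw [hβ₁]; field_simp; ring
  have hq : 2 - 2 * β₂ = 1 - β₁ := by rw [hβ₁, hβ₂]; field_simp; ring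
  have hden : 2 ^ (1 - β₂) * k₂ * (1 - β₂) = (2 * μf) ^ β₁ * (1 - β₁) := by
    have h2 : (2 : ℝ) ^ (1 - β₂) * 2 ^ β₂ = 2 := by rw [← Real.rpow_add two_pos]; norm_num
    rw [hk₂]
    linear_combination (1 - β₂) * (2 * μf) ^ β₁ * h2 + (2 * μf) ^ β₁ * hq
  have hderiv : ∀ s, 0 ≤ s → HasDerivAt (fun s => f (x s) - f xstar)
      (-‖gradient f (x s)‖ ^ (2 * β₁)) s := fun s hs =>
    hr ▸ (hasDerivAt_comp_of_modifiedGradientFlow (((div_lt_one hp1).2 (by linarith)).trans one_lt_two).ne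
      (hf.differentiable one_ne_zero _) (hx s hs)).sub_const _
  have hdecay : ∀ s, 0 ≤ s →
      -‖gradient f (x s)‖ ^ (2 * β₁) ≤ -((2 * μf) ^ β₁ * (f (x s) - f xstar) ^ β₁) :=
    fun s _ => neg_le_neg <| mul_rpow_le_rpow_of_mul_le_half_sq hμf.le (sub_nonneg.2 (hmin _))
      (norm_nonneg _) hβ₁pos (hPL (x s))
  rw [hq, hden] at ht
  exact sub_eq_zero.1 <| eq_zero_of_hasDerivAt_le_neg_mul_rpow (by positivity) hβ₁lt
    (fun s => sub_nonneg.2 (hmin _)) hderiv hdecay ht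

/-- Modified gradient flow `ẋ = −∇f(x)/‖∇f(x)‖^{(p−2)/(p−1)}`, `p > 2`, reaches the minimum
value of a gradient-dominated (PL) function in finite time
`(f(x(0))−f*)^{2−2β₂}/(2^{1−β₂} k₂ (1−β₂))`, where `β₁ = p/(2(p−1))`,
`β₂ = (3p−2)/(4(p−1))` and `k₂ = (2μ_f)^{β₁} 2^{β₂}`. -/
theorem modified_gradient_flow_finite_time_PL
    {n : ℕ} (p : ℝ) (hp : 2 < p)
    (β₁ β₂ k₂ : ℝ) (hβ₁ : β₁ = p / (2 * (p - 1))) (hβ₂ : β₂ = (3 * p - 2) / (4 * (p - 1)))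
    (μf : ℝ) (hμf : 0 < μf) (hk₂ : k₂ = (2 * μf) ^ β₁ * 2 ^ β₂)
    (f : EuclideanSpace ℝ (Fin n) → ℝ) (hf : ContDiff ℝ 1 f)
    (xstar : EuclideanSpace ℝ (Fin n))
    (hmin : ∀ y, f xstar ≤ f y)
    (huniq : ∀ y, f y = f xstar → y = xstar)
    (hPL : ∀ y : EuclideanSpace ℝ (Fin n),
      μf * (f y - f xstar) ≤ (1 / 2) * ‖gradient f y‖ ^ 2)
    (x : ℝ → EuclideanSpace ℝ (Fin n))
    (hx : ∀ t : ℝ, 0 ≤ t → HasDerivAt x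
      (if gradient f (x t) = 0 then 0
       else -(‖gradient f (x t)‖ ^ ((p - 2) / (p - 1)))⁻¹ • gradient f (x t)) t) :
    ∀ t : ℝ,
      (f (x 0) - f xstar) ^ (2 - 2 * β₂) / (2 ^ (1 - β₂) * k₂ * (1 - β₂)) ≤ t →
      f (x t) = f xstar :=
  modified_gradient_flow_finite_time_PL_general p hp β₁ β₂ k₂ hβ₁ hβ₂ μf hμf hk₂ f hf xstar hmin hPL
    x hx
end

section
/- Fix c₁, c₂ > 0, p₁ > 2, 1 < p₂ < 2, and set α₁ = 2 − (p₁−2)/(p₁−1) ∈ (1,2) and α₂ = 2 − (p₂−2)/(p₂−1) > 2. Let f satisfy the strong-convexity bound ⟪v, ∇²f(x) v⟫ ≥ k‖v‖² (k > 0) with unique critical point x*. Let x : ℝ → ℝⁿ be any trajectory of the flow ẋ = −c₁∇f(x)/‖∇f(x)‖^{(p₁−2)/(p₁−1)} − c₂∇f(x)/‖∇f(x)‖^{(p₂−2)/(p₂−1)} (right-hand side taken to be 0 when ∇f(x) = 0). Then, regardless of the initial condition x(0), x(t) = x* for every t ≥ T₃ := 2^{1−α₁/2}/(c₁ k (2−α₁))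 + 2^{1−α₂/2}/(c₂ k (α₂−2)); i.e. the flow is fixed-time stable with settling time bounded uniformly over all initial conditions. -/
open scoped RealInnerProductSpace Classical

/-!
Along the flow, `V = ‖∇f(x)‖²` satisfies `V' = 2⟪∇f, ∇²f ẋ⟫ ≤ -(2kc₁ V^{α₁/2} + 2kc₂ V^{α₂/2})`
by strong convexity. On any interval where `V > 0` the function `V^{1-q}/(1-q)` then decreases at
rate at least `2kc` for each of the two exponents `q = αᵢ/2`. As `α₂/2 > 1`, this forces `V ≤ 2`
within time `2^{1-α₂/2}/(c₂k(α₂-2))`, however large `V(0)` is; as `α₁/2 < 1`, it then forces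
`V = 0` within a further `2^{1-α₁/2}/(c₁k(2-α₁))`. Finally, strong convexity makes `∇f` injective,
so `∇f(x(t)) = 0 = ∇f(x*)` gives `x(t) = x*`.
-/

open Set

theorem image_sub_le_mul_sub_of_hasDerivAt_le {g g' : ℝ → ℝ} {a b C : ℝ} (hab : a ≤ b)
    (hg : ∀ t ∈ Icc a b, HasDerivAt g (g' t) t) (hle : ∀ t ∈ Icc a b, g' t ≤ C) :
    g b - g a ≤ C * (b - a) := by
  refine (convex_Icc a b).image_sub_le_mul_sub_of_deriv_le
    (fun t ht => (hg t ht).continuousAt.continuousWithinAt)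
    (fun t ht => (hg t (interior_subset ht)).differentiableAt.differentiableWithinAt)
    (fun t ht => ?_) a (left_mem_Icc.2 hab) b (right_mem_Icc.2 hab) hab
  rw [(hg t (interior_subset ht)).deriv]
  exact hle t (interior_subset ht)

section FixedTimeStability

variable {V V' : ℝ → ℝ} {a q t₀ : ℝ}

theorem mul_sub_le_rpow_sub_div_of_hasDerivAt_le {t₁ : ℝ} (hq : q ≠ 1) (ht : t₀ ≤ t₁)
    (hpos : ∀ t ∈ Icc t₀ t₁, 0 < V t) (hV : ∀ t ∈ Icc t₀ t₁, HasDerivAt V (V' t) t)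
    (hV' : ∀ t ∈ Icc t₀ t₁, V' t ≤ -(a * V t ^ q)) :
    a * (t₁ - t₀) ≤ (V t₀ ^ (1 - q) - V t₁ ^ (1 - q)) / (1 - q) := by
  have hq' : 1 - q ≠ 0 := sub_ne_zero.2 (Ne.symm hq)
  have hderiv : ∀ t ∈ Icc t₀ t₁,
      HasDerivAt (fun t => V t ^ (1 - q) / (1 - q)) (V t ^ (-q) * V' t) t := by
    intro t ht
    refine (((hV t ht).rpow_const (p := 1 - q) (Or.inl (hpos t ht).ne')).div_const
      (1 - q)).congr_deriv ?_
    rw [show 1 - q - 1 = -q by ring]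
    field_simp
  have hrate : ∀ t ∈ Icc t₀ t₁, V t ^ (-q) * V' t ≤ -a := by
    intro t ht
    have hVq : V t ^ (-q) * V t ^ q = 1 := by
      rw [← Real.rpow_add (hpos t ht), neg_add_cancel, Real.rpow_zero]
    calc V t ^ (-q) * V' t ≤ V t ^ (-q) * -(a * V t ^ q) :=
          mul_le_mul_of_nonneg_left (hV' t ht) (Real.rpow_nonneg (hpos t ht).le _)
      _ = -a := by linear_combination (-a) * hVq
  have := image_sub_le_mul_sub_of_hasDerivAt_le ht hderiv hrate
  rw [sub_div]
  linarith

theorem exists_eq_zero_of_hasDerivAt_le_neg_rpow (ha : 0 < a) (hq : q < 1)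
    (hnonneg : ∀ t ≥ t₀, 0 ≤ V t) (hV : ∀ t ≥ t₀, HasDerivAt V (V' t) t)
    (hV' : ∀ t ≥ t₀, V' t ≤ -(a * V t ^ q)) :
    ∃ t ∈ Icc t₀ (t₀ + V t₀ ^ (1 - q) / (a * (1 - q))), V t = 0 := by
  set T := V t₀ ^ (1 - q) / (a * (1 - q))
  have hq' : 0 < 1 - q := sub_pos.2 hq
  have hT : 0 ≤ T := div_nonneg (Real.rpow_nonneg (hnonneg t₀ le_rfl) _) (by positivity)
  by_contra! hne
  have hpos : ∀ t ∈ Icc t₀ (t₀ + T), 0 < V t := fun t ht =>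
    (hnonneg t ht.1).lt_of_ne (hne t ht).symm
  have hdecay := mul_sub_le_rpow_sub_div_of_hasDerivAt_le hq.ne (le_add_of_nonneg_right hT)
    hpos (fun t ht => hV t ht.1) (fun t ht => hV' t ht.1)
  have hend : 0 < V (t₀ + T) ^ (1 - q) :=
    Real.rpow_pos_of_pos (hpos _ ⟨le_add_of_nonneg_right hT, le_rfl⟩) _
  have haT : a * (t₀ + T - t₀) = V t₀ ^ (1 - q) / (1 - q) := by
    simp only [T, add_sub_cancel_left]; field_simp
  rw [haT, div_le_div_iff_of_pos_right hq'] at hdecay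
  linarith

theorem exists_le_of_hasDerivAt_le_neg_rpow {θ : ℝ} (ha : 0 < a) (hq : 1 < q) (hθ : 0 < θ)
    (hV : ∀ t ≥ t₀, HasDerivAt V (V' t) t) (hV' : ∀ t ≥ t₀, V' t ≤ -(a * V t ^ q)) :
    ∃ t ∈ Icc t₀ (t₀ + θ ^ (1 - q) / (a * (q - 1))), V t ≤ θ := by
  set T := θ ^ (1 - q) / (a * (q - 1))
  have hq' : 0 < q - 1 := sub_pos.2 hq
  have hT : 0 ≤ T := by positivity
  by_contra! hgt
  have hpos : ∀ t ∈ Icc t₀ (t₀ + T), 0 < V t := fun t ht => hθ.trans (hgt t ht)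
  have hdecay := mul_sub_le_rpow_sub_div_of_hasDerivAt_le hq.ne' (le_add_of_nonneg_right hT)
    hpos (fun t ht => hV t ht.1) (fun t ht => hV' t ht.1)
  have hstart : 0 < V t₀ ^ (1 - q) :=
    Real.rpow_pos_of_pos (hpos _ ⟨le_rfl, le_add_of_nonneg_right hT⟩) _
  have hend : V (t₀ + T) ^ (1 - q) < θ ^ (1 - q) :=
    Real.rpow_lt_rpow_of_neg hθ (hgt _ ⟨le_add_of_nonneg_right hT, le_rfl⟩) (by linarith)
  have haT : a * (t₀ + T - t₀) = θ ^ (1 - q) / (q - 1) := by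
    simp only [T, add_sub_cancel_left]; field_simp
  rw [haT, ← neg_sub q 1, div_neg, ← neg_div, neg_sub, div_le_div_iff_of_pos_right hq'] at hdecay
  linarith

theorem eq_zero_of_hasDerivAt_le_neg_rpow_add_rpow {b q₁ q₂ θ t : ℝ} (ha : 0 < a) (hb : 0 < b)
    (hq₁ : q₁ < 1) (hq₂ : 1 < q₂) (hθ : 0 < θ)
    (hnonneg : ∀ t ≥ t₀, 0 ≤ V t) (hV : ∀ t ≥ t₀, HasDerivAt V (V' t) t)
    (hV' : ∀ t ≥ t₀, V' t ≤ -(a * V t ^ q₁ + b * V t ^ q₂))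
    (ht : t₀ + (θ ^ (1 - q₁) / (a * (1 - q₁)) + θ ^ (1 - q₂) / (b * (q₂ - 1))) ≤ t) :
    V t = 0 := by
  have hterm : ∀ c r : ℝ, 0 ≤ c → ∀ s ≥ t₀, 0 ≤ c * V s ^ r := fun c r hc s hs =>
    mul_nonneg hc (Real.rpow_nonneg (hnonneg s hs) r)
  have hanti : AntitoneOn V (Ici t₀) := by
    refine antitoneOn_of_hasDerivWithinAt_nonpos (convex_Ici t₀)
      (fun s hs => (hV s hs).continuousAt.continuousWithinAt)
      (fun s hs => (hV s (interior_subset hs)).hasDerivWithinAt) (fun s hs => ?_)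
    have hs := interior_subset hs
    linarith [hV' s hs, hterm a q₁ ha.le s hs, hterm b q₂ hb.le s hs]
  obtain ⟨s, hs, hVs⟩ := exists_le_of_hasDerivAt_le_neg_rpow hb hq₂ hθ hV
    (fun s hs => by linarith [hV' s hs, hterm a q₁ ha.le s hs])
  have hs₀ : ∀ u ≥ s, u ≥ t₀ := fun u hu => hs.1.trans hu
  obtain ⟨u, hu, hVu⟩ := exists_eq_zero_of_hasDerivAt_le_neg_rpow ha hq₁
    (fun u hu => hnonneg u (hs₀ u hu)) (fun u hu => hV u (hs₀ u hu))
    (fun u hu => by linarith [hV' u (hs₀ u hu), hterm b q₂ hb.le u (hs₀ u hu)])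
  have hVs' : V s ^ (1 - q₁) / (a * (1 - q₁)) ≤ θ ^ (1 - q₁) / (a * (1 - q₁)) :=
    div_le_div_of_nonneg_right
      (Real.rpow_le_rpow (hnonneg s hs.1) hVs (sub_pos.2 hq₁).le) (mul_pos ha (sub_pos.2 hq₁)).le
  have hut : u ≤ t := by linarith [hu.2, hs.2]
  have := hanti (hs₀ u hu.1) (hs₀ u hu.1 |>.trans hut) hut
  linarith [hnonneg t (hs₀ u hu.1 |>.trans hut)]

end FixedTimeStability

section GradientFlow

variable {E : Type*} [NormedAddCommGroup E] [InnerProductSpace ℝ E]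

theorem ContDiff.differentiable_gradient [CompleteSpace E] {f : E → ℝ} (hf : ContDiff ℝ 2 f) :
    Differentiable ℝ (gradient f) :=
  ((InnerProductSpace.toDual ℝ E).symm.toContinuousLinearEquiv.contDiff.comp
    (hf.fderiv_right (m := 1) (by norm_num))).differentiable one_ne_zero

theorem mul_norm_sub_sq_le_inner_sub_sub {G : E → E} {k : ℝ} (hG : Differentiable ℝ G)
    (hk : ∀ x v, k * ‖v‖ ^ 2 ≤ ⟪v, fderiv ℝ G x v⟫) (y z : E) :
    k * ‖y - z‖ ^ 2 ≤ ⟪G y - G z, y - z⟫ := by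
  set d := y - z
  have hφ : ∀ s : ℝ, HasDerivAt (fun s : ℝ => ⟪G (z + s • d), d⟫)
      ⟪fderiv ℝ G (z + s • d) d, d⟫ s := by
    intro s
    have hline : HasDerivAt (fun s : ℝ => z + s • d) d s := by
      simpa using ((hasDerivAt_id s).smul_const d).const_add z
    simpa using ((hG _).hasFDerivAt.comp_hasDerivAt s hline).inner ℝ (hasDerivAt_const s d)
  have := mul_sub_le_image_sub_of_le_deriv (fun s => (hφ s).differentiableAt)
    (fun s => by rw [(hφ s).deriv, real_inner_comm]; exact hk _ d) zero_le_one
  simpa [d, inner_sub_left] using this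

theorem injective_of_le_inner_fderiv {G : E → E} {k : ℝ} (hG : Differentiable ℝ G)
    (hk : ∀ x v, k * ‖v‖ ^ 2 ≤ ⟪v, fderiv ℝ G x v⟫) (hk₀ : 0 < k) : Function.Injective G := by
  intro y z hyz
  have := mul_norm_sub_sq_le_inner_sub_sub hG hk y z
  rw [hyz, sub_self, inner_zero_left] at this
  have : ‖y - z‖ ^ 2 ≤ 0 := by nlinarith
  exact sub_eq_zero.1 (by simpa using this)

noncomputable def fixedTimeField [DecidableEq E] (c₁ c₂ β₁ β₂ : ℝ) (g : E) : E :=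
  if g = 0 then 0 else -((c₁ / ‖g‖ ^ β₁) • g) - (c₂ / ‖g‖ ^ β₂) • g

theorem mul_rpow_le_inner_apply_div_rpow_smul {D : E →L[ℝ] E} {g : E} {k c β : ℝ} (hg : g ≠ 0)
    (hc : 0 ≤ c) (hD : k * ‖g‖ ^ 2 ≤ ⟪g, D g⟫) :
    k * c * (‖g‖ ^ 2) ^ ((2 - β) / 2) ≤ ⟪g, D ((c / ‖g‖ ^ β) • g)⟫ := by
  have hg' : 0 < ‖g‖ := norm_pos_iff.2 hg
  have hpow : (‖g‖ ^ 2) ^ ((2 - β) / 2) = ‖g‖ ^ 2 / ‖g‖ ^ β := by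
    rw [← Real.rpow_natCast, ← Real.rpow_mul hg'.le, ← Real.rpow_sub hg']
    norm_num [mul_div_cancel₀]
  rw [map_smul, real_inner_smul_right, hpow]
  calc k * c * (‖g‖ ^ 2 / ‖g‖ ^ β) = c / ‖g‖ ^ β * (k * ‖g‖ ^ 2) := by ring
    _ ≤ c / ‖g‖ ^ β * ⟪g, D g⟫ :=
      mul_le_mul_of_nonneg_left hD (div_nonneg hc (Real.rpow_nonneg hg'.le β))

theorem inner_apply_fixedTimeField_le [DecidableEq E] {D : E →L[ℝ] E} {g : E} {k c₁ c₂ β₁ β₂ : ℝ}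
    (hc₁ : 0 ≤ c₁) (hc₂ : 0 ≤ c₂) (hβ₁ : β₁ ≠ 2) (hβ₂ : β₂ ≠ 2) (hD : k * ‖g‖ ^ 2 ≤ ⟪g, D g⟫) :
    ⟪g, D (fixedTimeField c₁ c₂ β₁ β₂ g)⟫ ≤
      -(k * c₁ * (‖g‖ ^ 2) ^ ((2 - β₁) / 2) + k * c₂ * (‖g‖ ^ 2) ^ ((2 - β₂) / 2)) := by
  by_cases hg : g = 0
  · have hβ : ∀ β : ℝ, β ≠ 2 → (2 - β) / 2 ≠ 0 := fun β hβ h => hβ (by linarith)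
    simp [fixedTimeField, hg, Real.zero_rpow (hβ β₁ hβ₁), Real.zero_rpow (hβ β₂ hβ₂)]
  · rw [fixedTimeField, if_neg hg, map_sub, map_neg, inner_sub_right, inner_neg_right]
    linarith [mul_rpow_le_inner_apply_div_rpow_smul (β := β₁) hg hc₁ hD,
      mul_rpow_le_inner_apply_div_rpow_smul (β := β₂) hg hc₂ hD]

end GradientFlow

/-- The flow `ẋ = −c₁∇f/‖∇f‖^{(p₁−2)/(p₁−1)} − c₂∇f/‖∇f‖^{(p₂−2)/(p₂−1)}` reaches the unique
critical point of a strongly convex `f` within the fixed time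
`T₃ = 2^{1−α₁/2}/(c₁k(2−α₁)) + 2^{1−α₂/2}/(c₂k(α₂−2))`, uniformly in the initial condition. -/
theorem fixed_time_gradient_flow_strong_convex
    {n : ℕ} (c₁ c₂ p₁ p₂ : ℝ) (hc₁ : 0 < c₁) (hc₂ : 0 < c₂)
    (hp₁ : 2 < p₁) (hp₂ : 1 < p₂) (hp₂' : p₂ < 2)
    (α₁ α₂ : ℝ) (hα₁ : α₁ = 2 - (p₁ - 2) / (p₁ - 1)) (hα₂ : α₂ = 2 - (p₂ - 2) / (p₂ - 1))
    (f : EuclideanSpace ℝ (Fin n) → ℝ) (hf : ContDiff ℝ 2 f)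
    (k : ℝ) (hk : 0 < k)
    (hconv : ∀ x v : EuclideanSpace ℝ (Fin n),
      k * ‖v‖ ^ 2 ≤ ⟪v, fderiv ℝ (gradient f) x v⟫)
    (xstar : EuclideanSpace ℝ (Fin n)) (hxstar : gradient f xstar = 0)
    (x : ℝ → EuclideanSpace ℝ (Fin n))
    (hx : ∀ t : ℝ, 0 ≤ t → HasDerivAt x
      (if gradient f (x t) = 0 then 0
       else -((c₁ / ‖gradient f (x t)‖ ^ ((p₁ - 2) / (p₁ - 1))) • gradient f (x t))
            - (c₂ / ‖gradient f (x t)‖ ^ ((p₂ - 2) / (p₂ - 1))) • gradient f (x t)) t) :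
    ∀ t : ℝ,
      2 ^ (1 - α₁ / 2) / (c₁ * k * (2 - α₁)) + 2 ^ (1 - α₂ / 2) / (c₂ * k * (α₂ - 2)) ≤ t →
      x t = xstar := by
  intro t ht
  subst hα₁ hα₂
  set β₁ := (p₁ - 2) / (p₁ - 1)
  set β₂ := (p₂ - 2) / (p₂ - 1)
  have hβ₁ : 0 < β₁ := div_pos (by linarith) (by linarith)
  have hβ₁' : β₁ < 1 := (div_lt_one (by linarith)).2 (by linarith)
  have hβ₂ : β₂ < 0 := div_neg_of_neg_of_pos (by linarith) (by linarith)
  set G := gradient f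
  have hG : Differentiable ℝ G := hf.differentiable_gradient
  have hV : ∀ s ≥ 0, HasDerivAt (fun s => ‖G (x s)‖ ^ 2)
      (2 * ⟪G (x s), fderiv ℝ G (x s) (fixedTimeField c₁ c₂ β₁ β₂ (G (x s)))⟫) s :=
    fun s hs => ((hG (x s)).hasFDerivAt.comp_hasDerivAt s (hx s hs)).norm_sq
  have hV' : ∀ s ≥ 0,
      2 * ⟪G (x s), fderiv ℝ G (x s) (fixedTimeField c₁ c₂ β₁ β₂ (G (x s)))⟫ ≤
        -(2 * k * c₁ * (‖G (x s)‖ ^ 2) ^ ((2 - β₁) / 2) +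
          2 * k * c₂ * (‖G (x s)‖ ^ 2) ^ ((2 - β₂) / 2)) := fun s _ => by
    linarith [inner_apply_fixedTimeField_le (β₁ := β₁) (β₂ := β₂) hc₁.le hc₂.le (by linarith)
      (by linarith) (hconv (x s) (G (x s)))]
  have hVt := eq_zero_of_hasDerivAt_le_neg_rpow_add_rpow (θ := 2) (by positivity)
    (by positivity) (by linarith) (by linarith) two_pos (fun s _ => sq_nonneg _) hV hV'
    (t := t) (by rw [zero_add]; convert ht using 3 <;> ring)
  have : G (x t) = G xstar := by simpa [hxstar] using hVt
  exact injective_of_le_inner_fderiv hG hconv hk this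
end

section
/- Fix c₁, c₂ > 0, p₁ > 2, 1 < p₂ < 2, α₁ = 2 − (p₁−2)/(p₁−1), α₂ = 2 − (p₂−2)/(p₂−1). Let f satisfy the strong-convexity bound ⟪v, ∇²f(x) v⟫ ≥ k‖v‖² (k > 0). Suppose x : ℝ → ℝⁿ is differentiable at t with x'(t) = −c₁∇f(x(t))/‖∇f(x(t))‖^{(p₁−2)/(p₁−1)} − c₂∇f(x(t))/‖∇f(x(t))‖^{(p₂−2)/(p₂−1)} and ∇f(x(t)) ≠ 0. Then the function V ∘ x, where V(y) = ½‖∇f(y)‖², is differentiable at t and satisfies (V ∘ x)'(t) ≤ −c₁ k 2^{α₁/2} (V(x(t)))^{α₁/2} − c₂ k 2^{α₂/2} (V(x(t)))^{α₂/2}. -/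
open scoped RealInnerProductSpace

/-!
With `qᵢ = (pᵢ - 2) / (pᵢ - 1)`, the velocity of the flow is `-(a + b) • ∇f(x t)` where
`a = c₁ / ‖∇f‖^q₁` and `b = c₂ / ‖∇f‖^q₂`, so by the chain rule
`(V ∘ x)'(t) = -(a + b) ⟪∇f, ∇²f ∇f⟫ ≤ -(a + b) k ‖∇f‖²`. Since `αᵢ = 2 - qᵢ` and `2V = ‖∇f‖²`,
each term `cᵢ k 2^{αᵢ/2} V^{αᵢ/2} = cᵢ k ‖∇f‖^{2 - qᵢ}` is exactly the matching summand
of that bound.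
-/

section Gradient

variable {E : Type*} [NormedAddCommGroup E] [InnerProductSpace ℝ E] [CompleteSpace E]

theorem ContDiff.gradient {f : E → ℝ} {m n : WithTop ℕ∞} (hf : ContDiff ℝ n f)
    (hmn : m + 1 ≤ n) : ContDiff ℝ m (gradient f) := by
  change ContDiff ℝ m ((InnerProductSpace.toDual ℝ E).symm ∘ fderiv ℝ f)
  exact (InnerProductSpace.toDual ℝ E).symm.contDiff.comp (hf.fderiv_right hmn)

theorem HasDerivAt.half_norm_sq_gradient_comp {f : E → ℝ} {x : ℝ → E} {v : E} {t : ℝ}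
    (hx : HasDerivAt x v t) (hf : DifferentiableAt ℝ (gradient f) (x t)) :
    HasDerivAt (fun s => (1 / 2) * ‖gradient f (x s)‖ ^ 2)
      ⟪gradient f (x t), fderiv ℝ (gradient f) (x t) v⟫ t :=
  ((hf.hasFDerivAt.comp_hasDerivAt t hx).norm_sq.const_mul (1 / 2 : ℝ)).congr_deriv
    (by rw [Function.comp_apply]; ring)

end Gradient

theorem inner_apply_neg_smul_le {E : Type*} [NormedAddCommGroup E] [InnerProductSpace ℝ E]
    {H : E →L[ℝ] E} {k : ℝ} (hH : ∀ v, k * ‖v‖ ^ 2 ≤ ⟪v, H v⟫) (u : E) {c : ℝ} (hc : 0 ≤ c) :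
    ⟪u, H (-(c • u))⟫ ≤ -(c * (k * ‖u‖ ^ 2)) := by
  rw [map_neg, map_smul, inner_neg_right, inner_smul_right, neg_le_neg_iff]
  exact mul_le_mul_of_nonneg_left (hH u) hc

theorem Real.mul_two_rpow_mul_half_sq_rpow {r : ℝ} (hr : 0 < r) (c k q : ℝ) :
    c * k * 2 ^ ((2 - q) / 2) * ((1 / 2) * r ^ 2) ^ ((2 - q) / 2) = c / r ^ q * (k * r ^ 2) := by
  rw [mul_assoc, ← Real.mul_rpow zero_le_two (by positivity),
    show (2 : ℝ) * ((1 / 2) * r ^ 2) = r ^ (2 : ℝ) by rw [Real.rpow_two]; ring,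
    ← Real.rpow_mul hr.le, mul_div_cancel₀ _ two_ne_zero, Real.rpow_sub hr, Real.rpow_two]
  ring

theorem lyapunov_decrease_fixed_time_flow_strong_convex_general
    {n : ℕ} (c₁ c₂ p₁ p₂ : ℝ) (hc₁ : 0 < c₁) (hc₂ : 0 < c₂)
    (α₁ α₂ : ℝ) (hα₁ : α₁ = 2 - (p₁ - 2) / (p₁ - 1)) (hα₂ : α₂ = 2 - (p₂ - 2) / (p₂ - 1))
    (f : EuclideanSpace ℝ (Fin n) → ℝ) (hf : ContDiff ℝ 2 f)
    (k : ℝ)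
    (hconv : ∀ x v : EuclideanSpace ℝ (Fin n),
      k * ‖v‖ ^ 2 ≤ ⟪v, fderiv ℝ (gradient f) x v⟫)
    (x : ℝ → EuclideanSpace ℝ (Fin n)) (t : ℝ)
    (hx : HasDerivAt x
      (-((c₁ / ‖gradient f (x t)‖ ^ ((p₁ - 2) / (p₁ - 1))) • gradient f (x t))
        - (c₂ / ‖gradient f (x t)‖ ^ ((p₂ - 2) / (p₂ - 1))) • gradient f (x t)) t)
    (hne : gradient f (x t) ≠ 0) :
    ∃ d : ℝ, HasDerivAt (fun s => (1 / 2) * ‖gradient f (x s)‖ ^ 2) d t ∧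
      d ≤ -(c₁ * k * 2 ^ (α₁ / 2) * ((1 / 2) * ‖gradient f (x t)‖ ^ 2) ^ (α₁ / 2))
          - c₂ * k * 2 ^ (α₂ / 2) * ((1 / 2) * ‖gradient f (x t)‖ ^ 2) ^ (α₂ / 2) := by
  subst hα₁ hα₂
  set u := gradient f (x t)
  set a := c₁ / ‖u‖ ^ ((p₁ - 2) / (p₁ - 1))
  set b := c₂ / ‖u‖ ^ ((p₂ - 2) / (p₂ - 1))
  have hu : 0 < ‖u‖ := norm_pos_iff.mpr hne
  have hab : 0 ≤ a + b := by positivity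
  have hgrad : DifferentiableAt ℝ (gradient f) (x t) :=
    (hf.gradient (by norm_num)).differentiable one_ne_zero _
  refine ⟨_, hx.half_norm_sq_gradient_comp hgrad, ?_⟩
  rw [← neg_add', ← add_smul, Real.mul_two_rpow_mul_half_sq_rpow hu,
    Real.mul_two_rpow_mul_half_sq_rpow hu]
  calc ⟪u, fderiv ℝ (gradient f) (x t) (-((a + b) • u))⟫
      ≤ -((a + b) * (k * ‖u‖ ^ 2)) := inner_apply_neg_smul_le (hconv (x t)) u hab
    _ = -(a * (k * ‖u‖ ^ 2)) - b * (k * ‖u‖ ^ 2) := by ring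

/-- Lyapunov decrease for the two-term fixed-time flow under strong convexity: along
`ẋ = −c₁∇f/‖∇f‖^{(p₁−2)/(p₁−1)} − c₂∇f/‖∇f‖^{(p₂−2)/(p₂−1)}` (at a point where
`∇f(x(t)) ≠ 0`), `V(y) = ½‖∇f(y)‖²` satisfies
`(V∘x)'(t) ≤ −c₁k2^{α₁/2}V^{α₁/2} − c₂k2^{α₂/2}V^{α₂/2}`. -/
theorem lyapunov_decrease_fixed_time_flow_strong_convex
    {n : ℕ} (c₁ c₂ p₁ p₂ : ℝ) (hc₁ : 0 < c₁) (hc₂ : 0 < c₂)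
    (hp₁ : 2 < p₁) (hp₂ : 1 < p₂) (hp₂' : p₂ < 2)
    (α₁ α₂ : ℝ) (hα₁ : α₁ = 2 - (p₁ - 2) / (p₁ - 1)) (hα₂ : α₂ = 2 - (p₂ - 2) / (p₂ - 1))
    (f : EuclideanSpace ℝ (Fin n) → ℝ) (hf : ContDiff ℝ 2 f)
    (k : ℝ) (hk : 0 < k)
    (hconv : ∀ x v : EuclideanSpace ℝ (Fin n),
      k * ‖v‖ ^ 2 ≤ ⟪v, fderiv ℝ (gradient f) x v⟫)
    (x : ℝ → EuclideanSpace ℝ (Fin n)) (t : ℝ)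
    (hx : HasDerivAt x
      (-((c₁ / ‖gradient f (x t)‖ ^ ((p₁ - 2) / (p₁ - 1))) • gradient f (x t))
        - (c₂ / ‖gradient f (x t)‖ ^ ((p₂ - 2) / (p₂ - 1))) • gradient f (x t)) t)
    (hne : gradient f (x t) ≠ 0) :
    ∃ d : ℝ, HasDerivAt (fun s => (1 / 2) * ‖gradient f (x s)‖ ^ 2) d t ∧
      d ≤ -(c₁ * k * 2 ^ (α₁ / 2) * ((1 / 2) * ‖gradient f (x t)‖ ^ 2) ^ (α₁ / 2))
          - c₂ * k * 2 ^ (α₂ / 2) * ((1 / 2) * ‖gradient f (x t)‖ ^ 2) ^ (α₂ / 2) :=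
  lyapunov_decrease_fixed_time_flow_strong_convex_general c₁ c₂ p₁ p₂ hc₁ hc₂ α₁ α₂ hα₁ hα₂ f hf k
    hconv x t hx hne
end
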